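/- arXiv:2405.14655 — 6 statements merged into one kernel-verified Lean document; each statement's English description precedes it below -/
import Mathlib

section
/- In a finite-horizon MDP, for any two policies π_1, π_2 and any coefficient c ∈ [0,1], there exists a policy π_c such that for every step h and every state x_h ∈ X_h, the reach probability satisfies ρ^{π_c}(x_h) = c·ρ^{π_1}(x_h) + (1−c)·ρ^{π_2}(x_h). Specifically, the policy defined by π_c(y|x) = (c ρ^{π_1}(x) π_1(y|x) + (1−c) ρ^{π_2}(x) π_2(y|x)) / (c ρ^{π_1}(x) + (1−c) ρ^{π_2}(x)) (whenever the denominator is positive) satisfies this property. -/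
/-! The step-`h + 1` reach probabilities only depend on the step-`h` state–action occupancies
`ρ^π(x) π(y|x)`, and the mixture policy is chosen exactly so that its occupancies are the
`c`-mixture of those of `π₁` and `π₂`; induction on `h` then finishes. Where the mixture weight
`c ρ^{π₁}(x) + (1-c) ρ^{π₂}(x)` vanishes, both occupancies vanish by nonnegativity, so the
value of `πc` there is irrelevant. -/

open Finset

variable {X Y : Type} [Fintype X] [Fintype Y] [DecidableEq X]

/-- Reach probabilities: probability that the trajectory generated by policy `π`
with transitions `p` from initial state `x1` visits a given state at step `h`. -/
noncomputable def reach (p : ℕ → X → Y → X → ℝ) (π : ℕ → X → Y → ℝ) (x1 : X) :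
    ℕ → X → ℝ
  | 0, x => if x = x1 then 1 else 0
  | h + 1, x' => ∑ x : X, ∑ y : Y, reach p π x1 h x * (π h x y * p h x y x')

lemma mul_eq_of_pos_imp_eq_div {w n q : ℝ} (hw : 0 ≤ w) (hn : w = 0 → n = 0)
    (hq : 0 < w → q = n / w) : w * q = n := by
  rcases hw.eq_or_lt with hw0 | hwpos
  · rw [← hw0, zero_mul, hn hw0.symm]
  · rw [hq hwpos, mul_div_cancel₀ n hwpos.ne']

section Reach

variable (p : ℕ → X → Y → X → ℝ) (x1 : X)

lemma reach_succ (π : ℕ → X → Y → ℝ) (h : ℕ) (x' : X) :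
    reach p π x1 (h + 1) x' = ∑ x, ∑ y, reach p π x1 h x * π h x y * p h x y x' := by
  simp only [reach, mul_assoc]

lemma reach_nonneg {π : ℕ → X → Y → ℝ} (hp : ∀ h x y x', 0 ≤ p h x y x')
    (hπ : ∀ h x y, 0 ≤ π h x y) (h : ℕ) (x : X) : 0 ≤ reach p π x1 h x := by
  induction h generalizing x with
  | zero => simp only [reach]; split <;> norm_num
  | succ h ih =>
    rw [reach_succ]
    exact sum_nonneg fun x _ => sum_nonneg fun y _ =>
      mul_nonneg (mul_nonneg (ih x) (hπ h x y)) (hp h x y _)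

lemma reach_succ_eq_of_occupancy_eq {π π₁ π₂ : ℕ → X → Y → ℝ} {c : ℝ} {h : ℕ}
    (hocc : ∀ x y, reach p π x1 h x * π h x y =
      c * reach p π₁ x1 h x * π₁ h x y + (1 - c) * reach p π₂ x1 h x * π₂ h x y)
    (x' : X) :
    reach p π x1 (h + 1) x' =
      c * reach p π₁ x1 (h + 1) x' + (1 - c) * reach p π₂ x1 (h + 1) x' := by
  simp only [reach_succ, hocc, add_mul, sum_add_distrib, mul_sum, mul_assoc]

end Reach

/-- **Mixture policy lemma (Lemma A.4).** For any two policies `π₁, π₂` and any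
`c ∈ [0,1]`, any policy `πc` satisfying the stated mixture formula (whenever the
denominator is positive) has reach probabilities equal to the convex combination
`c·ρ^{π₁} + (1−c)·ρ^{π₂}` at every step and state. -/
theorem reach_convex_combination
    (p : ℕ → X → Y → X → ℝ) (π₁ π₂ πc : ℕ → X → Y → ℝ) (x1 : X)
    (c : ℝ) (hc : 0 ≤ c) (hc' : c ≤ 1)
    (hp : ∀ h x y x', 0 ≤ p h x y x')
    (hπ₁ : ∀ h x y, 0 ≤ π₁ h x y)
    (hπ₂ : ∀ h x y, 0 ≤ π₂ h x y)
    (hπc : ∀ h x y,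
      0 < c * reach p π₁ x1 h x + (1 - c) * reach p π₂ x1 h x →
        πc h x y =
          (c * reach p π₁ x1 h x * π₁ h x y + (1 - c) * reach p π₂ x1 h x * π₂ h x y) /
            (c * reach p π₁ x1 h x + (1 - c) * reach p π₂ x1 h x)) :
    ∀ h x, reach p πc x1 h x = c * reach p π₁ x1 h x + (1 - c) * reach p π₂ x1 h x := by
  intro h
  induction h with
  | zero => intro x; simp only [reach]; split <;> ring
  | succ h ih =>
    apply reach_succ_eq_of_occupancy_eq
    intro x y
    have hw₁ : 0 ≤ c * reach p π₁ x1 h x := mul_nonneg hc (reach_nonneg p x1 hp hπ₁ h x)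
    have hw₂ : 0 ≤ (1 - c) * reach p π₂ x1 h x :=
      mul_nonneg (sub_nonneg.2 hc') (reach_nonneg p x1 hp hπ₂ h x)
    rw [ih x]
    refine mul_eq_of_pos_imp_eq_div (add_nonneg hw₁ hw₂) (fun hw => ?_) (hπc h x y)
    obtain ⟨hz₁, hz₂⟩ := (add_eq_zero_iff_of_nonneg hw₁ hw₂).1 hw
    rw [hz₁, hz₂, zero_mul, zero_mul, add_zero]
end

section
/- Regularized value difference lemma: in a finite-horizon adversarial MDP with terminal reward r^t and regularization coefficient α > 0 relative to reference policy μ, for any two policies π, π': V_α^{π,t}(x_1) − V_α^{π',t}(x_1) = E_{π',p}[ Σ_{h=1}^{H} ( ⟨π(·|x_h) − π'(·|x_h), Q_α^{π,t}(x_h,·)⟩ + α·KL(π'(·|x_h)||μ(·|x_h)) − α·KL(π(·|x_h)||μ(·|x_h)) ) ], where the expectation is over trajectories generated by π' and p, and ⟨·,·⟩ is the inner product over actions. -/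
open Finset

variable {X Y : Type} [Fintype X] [Fintype Y] [DecidableEq X]

/-- Per-state KL divergence between action distributions. -/
noncomputable def klDist {Y : Type} [Fintype Y] (p q : Y → ℝ) : ℝ :=
  ∑ y, p y * Real.log (p y / q y)

/-- Probability of a path of `m` steps starting at state `x` at time `h`. -/
noncomputable def pathProb (p : ℕ → X → Y → X → ℝ) (π : ℕ → X → Y → ℝ)
    (h : ℕ) (x : X) (m : ℕ) (s : Fin (m + 1) → X) (a : Fin m → Y) : ℝ :=
  (if s 0 = x then (1 : ℝ) else 0) *
    ∏ i : Fin m, π (h + i) (s i.castSucc) (a i) * p (h + i) (s i.castSucc) (a i) (s i.succ)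

/-- The regularized value function `V_α^{π,t}(x_h)`: expected terminal reward minus
`α` times the accumulated per-state KL penalties w.r.t. the reference policy `μ`,
conditioned on being at state `x` at step `h`. -/
noncomputable def Vreg (p : ℕ → X → Y → X → ℝ) (π μ : ℕ → X → Y → ℝ) (r : X → ℝ)
    (α : ℝ) (H h : ℕ) (x : X) : ℝ :=
  ∑ s : Fin (H - h + 1) → X, ∑ a : Fin (H - h) → Y,
    pathProb p π h x (H - h) s a *
      (r (s (Fin.last (H - h))) -
        α * ∑ i : Fin (H - h), klDist (π (h + i) (s i.castSucc)) (μ (h + i) (s i.castSucc)))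

/-- The regularized Q-function `Q_α^{π,t}(x_h, y_h)`: as `Vreg` but additionally
conditioning on the first action `y` taken at step `h`. -/
noncomputable def Qreg (p : ℕ → X → Y → X → ℝ) (π μ : ℕ → X → Y → ℝ) (r : X → ℝ)
    (α : ℝ) (H h : ℕ) (x : X) (y : Y) : ℝ :=
  ∑ x' : X, p h x y x' *
    (∑ s : Fin (H - (h + 1) + 1) → X, ∑ a : Fin (H - (h + 1)) → Y,
      pathProb p π (h + 1) x' (H - (h + 1)) s a *
        (r (s (Fin.last (H - (h + 1)))) -
          α * (klDist (π h x) (μ h x) +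
            ∑ i : Fin (H - (h + 1)),
              klDist (π (h + 1 + i) (s i.castSucc)) (μ (h + 1 + i) (s i.castSucc)))))

/-!
Both regularized values satisfy the Bellman recursion `V_h(x) = ⟨σ_h(x), Q_h(x, ·)⟩` with
`Q_h(x, y) = E_p[V_{h+1}] - α KL(σ_h(x) ‖ μ_h(x))`. Subtracting the recursions for `π` and `π'`
and adding and subtracting `⟨π'_h(x), Q^π_h(x, ·)⟩` gives `Δ_h = D_h + E_{π', p}[Δ_{h+1}]` for
`Δ_h = V^π_h - V^{π'}_h`, where `D_h` is the summand on the right-hand side and `Δ_H = 0`.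
Unrolling this recursion along the trajectories of `π'` expresses `Δ_0` as the expected sum of
the `D_h`.
-/

set_option linter.unusedSectionVars false

lemma sum_fin_succ_pi {Z M : Type*} [Fintype Z] [AddCommMonoid M] {n : ℕ}
    (f : (Fin (n + 1) → Z) → M) :
    ∑ s, f s = ∑ z, ∑ s : Fin n → Z, f (Fin.cons z s) := by
  rw [← (Fin.consEquiv fun _ ↦ Z).sum_comp, Fintype.sum_prod_type]
  rfl

lemma sum_mul_add_of_sum_eq_one {ι : Type*} [Fintype ι] {w : ι → ℝ} (hw : ∑ i, w i = 1)
    (c : ℝ) (g : ι → ℝ) : ∑ i, w i * (c + g i) = c + ∑ i, w i * g i := by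
  simp only [mul_add, sum_add_distrib, ← sum_mul, hw, one_mul]

lemma sum_fin_cons_castSucc {M : Type*} [AddCommMonoid M] (F : ℕ → X → M) (h n : ℕ) (x : X)
    (s : Fin (n + 1) → X) :
    ∑ i : Fin (n + 1), F (h + i) ((Fin.cons x s : Fin (n + 2) → X) i.castSucc) =
      F h x + ∑ i : Fin n, F (h + 1 + i) (s i.castSucc) := by
  rw [Fin.sum_univ_succ]
  simp only [Fin.castSucc_zero, Fin.cons_zero, Fin.val_zero, Nat.add_zero, Fin.val_succ,
    ← Fin.succ_castSucc, Fin.cons_succ, add_assoc, add_comm 1]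

section Paths

variable (p : ℕ → X → Y → X → ℝ) (σ : ℕ → X → Y → ℝ)

lemma pathProb_of_ne {h : ℕ} {x : X} {n : ℕ} {s : Fin (n + 1) → X} (hs : s 0 ≠ x)
    (a : Fin n → Y) : pathProb p σ h x n s a = 0 := by
  simp [pathProb, hs]

lemma pathProb_cons (h : ℕ) (x : X) (n : ℕ) (s : Fin (n + 1) → X) (y : Y) (a : Fin n → Y) :
    pathProb p σ h x (n + 1) (Fin.cons x s) (Fin.cons y a) =
      σ h x y * p h x y (s 0) * pathProb p σ (h + 1) (s 0) n s a := by
  simp only [pathProb, Fin.prod_univ_succ, Fin.cons_zero, Fin.castSucc_zero, Fin.val_zero,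
    Nat.add_zero, ← Fin.succ_castSucc, Fin.cons_succ, Fin.val_succ, add_assoc,
    add_comm 1, if_true, one_mul]

noncomputable def pathExp (h : ℕ) (x : X) (n : ℕ) (g : (Fin (n + 1) → X) → (Fin n → Y) → ℝ) :
    ℝ :=
  ∑ s, ∑ a, pathProb p σ h x n s a * g s a

lemma pathExp_zero (h : ℕ) (x : X) (g : (Fin 1 → X) → (Fin 0 → Y) → ℝ) :
    pathExp p σ h x 0 g = g (fun _ ↦ x) Fin.elim0 := by
  simp only [pathExp, pathProb, sum_fin_succ_pi, Fin.cons_zero, univ_unique, sum_singleton,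
    Fintype.prod_empty, ite_mul, one_mul, zero_mul, sum_ite_eq', mem_univ, if_true]
  congr
  exact funext <| Fin.forall_fin_one.2 rfl

lemma pathExp_succ (h : ℕ) (x : X) (n : ℕ) (g : (Fin (n + 2) → X) → (Fin (n + 1) → Y) → ℝ) :
    pathExp p σ h x (n + 1) g =
      ∑ y, σ h x y * ∑ x', p h x y x' *
        pathExp p σ (h + 1) x' n fun s a ↦ g (Fin.cons x s) (Fin.cons y a) := by
  have start_at_x : ∀ x₀ ≠ x, ∑ s : Fin (n + 1) → X, ∑ a,
      pathProb p σ h x (n + 1) (Fin.cons x₀ s) a * g (Fin.cons x₀ s) a = 0 := fun x₀ hx₀ ↦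
    sum_eq_zero fun s _ ↦ sum_eq_zero fun a _ ↦ by
      rw [pathProb_of_ne p σ (by simpa using hx₀), zero_mul]
  have next_at_s0 : ∀ (y : Y) (s : Fin (n + 1) → X) (a : Fin n → Y),
      ∑ x', p h x y x' * pathProb p σ (h + 1) x' n s a =
        p h x y (s 0) * pathProb p σ (h + 1) (s 0) n s a :=
    fun y s a ↦ Fintype.sum_eq_single (s 0) fun x' hx' ↦ by
      rw [pathProb_of_ne p σ (Ne.symm hx'), mul_zero]
  have first_step : ∀ y, σ h x y * ∑ x', p h x y x' *
      pathExp p σ (h + 1) x' n (fun s a ↦ g (Fin.cons x s) (Fin.cons y a)) =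
        ∑ s, ∑ a, pathProb p σ h x (n + 1) (Fin.cons x s) (Fin.cons y a) *
          g (Fin.cons x s) (Fin.cons y a) := by
    intro y
    simp only [pathExp, mul_sum]
    rw [sum_comm]
    refine sum_congr rfl fun s _ ↦ ?_
    rw [sum_comm]
    refine sum_congr rfl fun a _ ↦ ?_
    rw [pathProb_cons, mul_assoc (σ h x y), ← next_at_s0, mul_sum, sum_mul]
    exact sum_congr rfl fun x' _ ↦ by ring
  rw [pathExp, sum_fin_succ_pi, Fintype.sum_eq_single x start_at_x]
  simp only [sum_fin_succ_pi (Z := Y) (M := ℝ), first_step]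
  exact sum_comm

variable {p σ}

lemma pathExp_const (hp : ∀ h x y, ∑ x', p h x y x' = 1) (hσ : ∀ h x, ∑ y, σ h x y = 1)
    (h : ℕ) (x : X) (n : ℕ) (c : ℝ) : pathExp p σ h x n (fun _ _ ↦ c) = c := by
  induction n generalizing h x with
  | zero => rw [pathExp_zero]
  | succ n ih => simp only [pathExp_succ, ih, ← sum_mul, hp, hσ, one_mul]

lemma pathExp_const_add (hp : ∀ h x y, ∑ x', p h x y x' = 1) (hσ : ∀ h x, ∑ y, σ h x y = 1)
    (h : ℕ) (x : X) (n : ℕ) (c : ℝ) (g : (Fin (n + 1) → X) → (Fin n → Y) → ℝ) :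
    pathExp p σ h x n (fun s a ↦ c + g s a) = c + pathExp p σ h x n g := by
  have total := pathExp_const hp hσ h x n c
  unfold pathExp at total ⊢
  simp only [mul_add, sum_add_distrib, total]

lemma pathExp_sub_const (hp : ∀ h x y, ∑ x', p h x y x' = 1) (hσ : ∀ h x, ∑ y, σ h x y = 1)
    (h : ℕ) (x : X) (n : ℕ) (g : (Fin (n + 1) → X) → (Fin n → Y) → ℝ) (c : ℝ) :
    pathExp p σ h x n (fun s a ↦ g s a - c) = pathExp p σ h x n g - c := by
  have total := pathExp_const hp hσ h x n c
  unfold pathExp at total ⊢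
  simp only [mul_sub, sum_sub_distrib, total]

theorem eq_pathExp_sum_of_bellman (hp : ∀ h x y, ∑ x', p h x y x' = 1)
    (hσ : ∀ h x, ∑ y, σ h x y = 1) (f D : ℕ → X → ℝ) (n h : ℕ)
    (hf : ∀ k, h ≤ k → k < h + n → ∀ x,
      f k x = D k x + ∑ y, σ k x y * ∑ x', p k x y x' * f (k + 1) x')
    (hterm : ∀ x, f (h + n) x = 0) (x : X) :
    f h x = pathExp p σ h x n fun s _ ↦ ∑ i : Fin n, D (h + i) (s i.castSucc) := by
  induction n generalizing h x with
  | zero => simpa [pathExp_zero] using hterm x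
  | succ n ih =>
    have hf_next : ∀ x', f (h + 1) x' =
        pathExp p σ (h + 1) x' n fun s _ ↦ ∑ i : Fin n, D (h + 1 + i) (s i.castSucc) :=
      ih (h + 1) (fun k hk hk' ↦ hf k (by omega) (by omega))
        (fun x' ↦ by rw [add_right_comm]; exact hterm x')
    rw [hf h le_rfl (by omega), pathExp_succ]
    simp only [sum_fin_cons_castSucc D, pathExp_const_add hp hσ, ← hf_next,
      sum_mul_add_of_sum_eq_one (hp _ _ _), sum_mul_add_of_sum_eq_one (hσ _ _)]

end Paths

section Regularized

variable (p : ℕ → X → Y → X → ℝ) (σ μ : ℕ → X → Y → ℝ) (r : X → ℝ) (α : ℝ)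

noncomputable def regReturn (h n : ℕ) (s : Fin (n + 1) → X) : ℝ :=
  r (s (Fin.last n)) -
    α * ∑ i : Fin n, klDist (σ (h + i) (s i.castSucc)) (μ (h + i) (s i.castSucc))

lemma regReturn_cons (h n : ℕ) (x : X) (s : Fin (n + 1) → X) :
    regReturn σ μ r α h (n + 1) (Fin.cons x s) =
      regReturn σ μ r α (h + 1) n s - α * klDist (σ h x) (μ h x) := by
  rw [regReturn, regReturn, sum_fin_cons_castSucc (fun k z ↦ klDist (σ k z) (μ k z)),
    ← Fin.succ_last, Fin.cons_succ]
  ring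

noncomputable def regValue (h n : ℕ) (x : X) : ℝ :=
  pathExp p σ h x n fun s _ ↦ regReturn σ μ r α h n s

lemma Vreg_eq_regValue (H h : ℕ) (x : X) :
    Vreg p σ μ r α H h x = regValue p σ μ r α h (H - h) x :=
  rfl

lemma regValue_zero (h : ℕ) (x : X) : regValue p σ μ r α h 0 x = r x := by
  simp [regValue, pathExp_zero, regReturn]

lemma Vreg_self (H : ℕ) (x : X) : Vreg p σ μ r α H H x = r x := by
  rw [Vreg_eq_regValue, Nat.sub_self, regValue_zero]

variable {p σ}

lemma regValue_succ (hp : ∀ h x y, ∑ x', p h x y x' = 1) (hσ : ∀ h x, ∑ y, σ h x y = 1)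
    (h n : ℕ) (x : X) :
    regValue p σ μ r α h (n + 1) x =
      ∑ y, σ h x y * ∑ x', p h x y x' *
        (regValue p σ μ r α (h + 1) n x' - α * klDist (σ h x) (μ h x)) := by
  simp only [regValue, pathExp_succ, regReturn_cons, pathExp_sub_const hp hσ]

lemma Qreg_eq_sum (hp : ∀ h x y, ∑ x', p h x y x' = 1) (hσ : ∀ h x, ∑ y, σ h x y = 1)
    (H h : ℕ) (x : X) (y : Y) :
    Qreg p σ μ r α H h x y =
      ∑ x', p h x y x' * (Vreg p σ μ r α H (h + 1) x' - α * klDist (σ h x) (μ h x)) := by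
  have return_split : ∀ (n : ℕ) (s : Fin (n + 1) → X),
      r (s (Fin.last n)) - α * (klDist (σ h x) (μ h x) +
        ∑ i : Fin n, klDist (σ (h + 1 + i) (s i.castSucc)) (μ (h + 1 + i) (s i.castSucc))) =
      regReturn σ μ r α (h + 1) n s - α * klDist (σ h x) (μ h x) := fun n s ↦ by
    rw [regReturn]
    ring
  simp only [Qreg, return_split, Vreg_eq_regValue, regValue, ← pathExp_sub_const hp hσ]
  rfl

lemma Vreg_eq_sum_Qreg (hp : ∀ h x y, ∑ x', p h x y x' = 1) (hσ : ∀ h x, ∑ y, σ h x y = 1)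
    {H h : ℕ} (hh : h < H) (x : X) :
    Vreg p σ μ r α H h x = ∑ y, σ h x y * Qreg p σ μ r α H h x y := by
  obtain ⟨n, hn⟩ : ∃ n, H - h = n + 1 := ⟨H - h - 1, by omega⟩
  have hn' : H - (h + 1) = n := by omega
  simp only [Qreg_eq_sum μ r α hp hσ, Vreg_eq_regValue, hn, hn', regValue_succ μ r α hp hσ]

lemma Vreg_sub_Vreg (hp : ∀ h x y, ∑ x', p h x y x' = 1) {π π' : ℕ → X → Y → ℝ}
    (hπ : ∀ h x, ∑ y, π h x y = 1) (hπ' : ∀ h x, ∑ y, π' h x y = 1)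
    {H h : ℕ} (hh : h < H) (x : X) :
    Vreg p π μ r α H h x - Vreg p π' μ r α H h x =
      ((∑ y, (π h x y - π' h x y) * Qreg p π μ r α H h x y) +
          α * klDist (π' h x) (μ h x) - α * klDist (π h x) (μ h x)) +
        ∑ y, π' h x y * ∑ x', p h x y x' *
          (Vreg p π μ r α H (h + 1) x' - Vreg p π' μ r α H (h + 1) x') := by
  have Qreg_sub : ∀ y, Qreg p π μ r α H h x y - Qreg p π' μ r α H h x y =
      (α * klDist (π' h x) (μ h x) - α * klDist (π h x) (μ h x)) +
        ∑ x', p h x y x' * (Vreg p π μ r α H (h + 1) x' - Vreg p π' μ r α H (h + 1) x') := by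
    intro y
    rw [Qreg_eq_sum μ r α hp hπ, Qreg_eq_sum μ r α hp hπ', ← sum_sub_distrib,
      ← sum_mul_add_of_sum_eq_one (hp h x y)]
    exact sum_congr rfl fun x' _ ↦ by ring
  calc Vreg p π μ r α H h x - Vreg p π' μ r α H h x
      = ∑ y, (π h x y - π' h x y) * Qreg p π μ r α H h x y +
          ∑ y, π' h x y * (Qreg p π μ r α H h x y - Qreg p π' μ r α H h x y) := by
        rw [Vreg_eq_sum_Qreg μ r α hp hπ hh, Vreg_eq_sum_Qreg μ r α hp hπ' hh,
          ← sum_add_distrib, ← sum_sub_distrib]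
        exact sum_congr rfl fun y _ ↦ by ring
    _ = _ := by
        simp only [Qreg_sub, sum_mul_add_of_sum_eq_one (hπ' h x)]
        ring

end Regularized

theorem regularized_value_difference_general
    (p : ℕ → X → Y → X → ℝ) (π π' μ : ℕ → X → Y → ℝ) (r : X → ℝ) (α : ℝ)
    (H : ℕ) (x1 : X)
    (hp : (∀ h x y x', 0 ≤ p h x y x') ∧ ∀ h x y, ∑ x', p h x y x' = 1)
    (hπ : (∀ h x y, 0 ≤ π h x y) ∧ ∀ h x, ∑ y, π h x y = 1)
    (hπ' : (∀ h x y, 0 ≤ π' h x y) ∧ ∀ h x, ∑ y, π' h x y = 1) :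
    Vreg p π μ r α H 0 x1 - Vreg p π' μ r α H 0 x1 =
      ∑ s : Fin (H - 0 + 1) → X, ∑ a : Fin (H - 0) → Y,
        pathProb p π' 0 x1 (H - 0) s a *
          ∑ h : Fin (H - 0),
            ((∑ y : Y, (π h (s h.castSucc) y - π' h (s h.castSucc) y) *
                Qreg p π μ r α H h (s h.castSucc) y) +
              α * klDist (π' h (s h.castSucc)) (μ h (s h.castSucc)) -
              α * klDist (π h (s h.castSucc)) (μ h (s h.castSucc))) := by
  have unrolled := eq_pathExp_sum_of_bellman hp.2 hπ'.2
    (fun k x ↦ Vreg p π μ r α H k x - Vreg p π' μ r α H k x)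
    (fun k x ↦ (∑ y, (π k x y - π' k x y) * Qreg p π μ r α H k x y) +
      α * klDist (π' k x) (μ k x) - α * klDist (π k x) (μ k x))
    H 0 (fun k _ hk x ↦ Vreg_sub_Vreg μ r α hp.2 hπ.2 hπ'.2 (by omega) x)
    (fun x ↦ by rw [zero_add, Vreg_self, Vreg_self, sub_self]) x1
  simp only [zero_add] at unrolled
  exact unrolled

/-- **Regularized value difference lemma (Lemma E.4).** For any two policies `π, π'`:
`V_α^{π,t}(x_1) − V_α^{π',t}(x_1)` equals the expectation, over trajectories generated
by `π'` and `p`, of the sum over steps of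
`⟨π − π', Q_α^{π,t}⟩[x_h] + α·KL(π'‖μ)[x_h] − α·KL(π‖μ)[x_h]`. -/
theorem regularized_value_difference
    (p : ℕ → X → Y → X → ℝ) (π π' μ : ℕ → X → Y → ℝ) (r : X → ℝ) (α : ℝ)
    (H : ℕ) (x1 : X)
    (hr : ∀ x, 0 ≤ r x ∧ r x ≤ 1) (hα : 0 < α)
    (hp : (∀ h x y x', 0 ≤ p h x y x') ∧ ∀ h x y, ∑ x', p h x y x' = 1)
    (hπ : (∀ h x y, 0 ≤ π h x y) ∧ ∀ h x, ∑ y, π h x y = 1)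
    (hπ' : (∀ h x y, 0 ≤ π' h x y) ∧ ∀ h x, ∑ y, π' h x y = 1) :
    Vreg p π μ r α H 0 x1 - Vreg p π' μ r α H 0 x1 =
      ∑ s : Fin (H - 0 + 1) → X, ∑ a : Fin (H - 0) → Y,
        pathProb p π' 0 x1 (H - 0) s a *
          ∑ h : Fin (H - 0),
            ((∑ y : Y, (π h (s h.castSucc) y - π' h (s h.castSucc) y) *
                Qreg p π μ r α H h (s h.castSucc) y) +
              α * klDist (π' h (s h.castSucc)) (μ h (s h.castSucc)) -
              α * klDist (π h (s h.castSucc)) (μ h (s h.castSucc))) :=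
  regularized_value_difference_general p π π' μ r α H x1 hp hπ hπ'
end

section
/- The Nash equilibrium is close to the reference policy: if π*_α is a Nash equilibrium of the regularized preference model P_α (so that P_α(π*_α, π') ≥ P_α(π*_α, π*_α) = 1/2 for all π', in particular for π' = μ), then KL_p(π*_α || μ) ≤ 1/(2α). -/
theorem mul_kl_le_pref_sub_half_of_nash
    {Pol : Type} (pref : Pol → Pol → ℝ) (KL : Pol → ℝ) (μ πstar : Pol) (α : ℝ)
    (hKLμ : KL μ = 0) (hdiag : pref πstar πstar = 1 / 2)
    (hnash_μ : pref πstar πstar - α * KL πstar + α * KL πstar ≤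
      pref πstar μ - α * KL πstar + α * KL μ) :
    α * KL πstar ≤ pref πstar μ - 1 / 2 := by
  rw [hdiag, hKLμ] at hnash_μ
  linarith

theorem nash_close_to_reference_general
    {Pol : Type} (pref : Pol → Pol → ℝ) (KL : Pol → ℝ) (μ πstar : Pol) (α : ℝ)
    (hα : 0 < α)
    (hrange : ∀ π π', 0 ≤ pref π π' ∧ pref π π' ≤ 1)
    (hKLμ : KL μ = 0)
    (hdiag : pref πstar πstar = 1 / 2)
    (hnash : ∀ π' : Pol,
      pref πstar πstar - α * KL πstar + α * KL πstar ≤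
        pref πstar π' - α * KL πstar + α * KL π') :
    KL πstar ≤ 1 / (2 * α) := by
  have hgap := mul_kl_le_pref_sub_half_of_nash pref KL μ πstar α hKLμ hdiag (hnash μ)
  have hpref_le_one := (hrange πstar μ).2
  rw [le_div_iff₀ (by positivity)]
  linarith

/-- **The Nash equilibrium is close to the reference policy (Lemma B.5).**
In the regularized preference model `P_α(π,π') = P(π≻π') − α·KL(π) + α·KL(π')`
(KL taken w.r.t. the reference policy `μ`, so `KL(μ) = 0`), if `π*` is a Nash
(max-min optimal) policy, so that `P_α(π*,π') ≥ P_α(π*,π*) = 1/2` for all `π'`,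
then `KL(π*‖μ) ≤ 1/(2α)`. -/
theorem nash_close_to_reference
    {Pol : Type} (pref : Pol → Pol → ℝ) (KL : Pol → ℝ) (μ πstar : Pol) (α : ℝ)
    (hα : 0 < α)
    (hrange : ∀ π π', 0 ≤ pref π π' ∧ pref π π' ≤ 1)
    (hKLnonneg : ∀ π, 0 ≤ KL π)
    (hKLμ : KL μ = 0)
    (hdiag : pref πstar πstar = 1 / 2)
    (hnash : ∀ π' : Pol,
      pref πstar πstar - α * KL πstar + α * KL πstar ≤
        pref πstar π' - α * KL πstar + α * KL π') :
    KL πstar ≤ 1 / (2 * α) :=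
  nash_close_to_reference_general pref KL μ πstar α hα hrange hKLμ hdiag hnash
end

section
/- Fundamental inequality of mixture mirror descent policy optimization: with mixture policy μ_t(y|x) ∝ π_t(y|x)^{1−η_t α} μ(y|x)^{η_t α} and update π_{t+1}(y|x_h) ∝ μ_t(y|x_h) exp(η_t Q_α^{μ_t,t}(x_h,y)), for any policy π and episode t: KL_p(π||π_{t+1}) ≤ (1 − η_t α) KL_p(π||π_t) + 2 η_t² E_{π,p}[ Σ_{h=1}^H ‖Q_α^{μ_t,t}(x_h,·)‖_∞² ] + η_t ( V_α^{μ_t,t}(x_1) − V_α^{π,t}(x_1) ). -/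
open Finset

variable {X Y : Type} [Fintype X] [Fintype Y] [DecidableEq X] [Nonempty Y]

/-- Trajectory-level KL divergence between two policies. -/
noncomputable def KLtraj (p : ℕ → X → Y → X → ℝ) (π π' : ℕ → X → Y → ℝ)
    (x1 : X) (H : ℕ) : ℝ :=
  ∑ s : Fin (H + 1) → X, ∑ a : Fin H → Y,
    pathProb p π 0 x1 H s a *
      Real.log (pathProb p π 0 x1 H s a / pathProb p π' 0 x1 H s a)

/-!
At a fixed time step and state, `π_{t+1} ∝ μ_t e^{ηQ}` is an exponential-weights step from the
geometric mixture `μ_t`, so `KL(π‖π_{t+1}) ≤ KL(π‖μ_t) + η⟨μ_t - π, Q⟩ + 2η²‖Q‖²_∞`, the last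
term bounding the log-moment generating function of the bounded variable `ηQ`. The mixture
inequality bounds `KL(π‖μ_t)` by `(1 - ηα) KL(π‖π_t) + ηα (KL(π‖μ) - KL(μ_t‖μ))`. Since `Q` is the
regularized Q-function of `μ_t`, the terms `η⟨μ_t - π, Q⟩ + ηα (KL(π‖μ) - KL(μ_t‖μ))` are `η` times
the one-step performance difference `V^{μ_t}(x) - (-α KL(π‖μ)(x) + E_{π,p} V^{μ_t}(x'))`.

By the chain rule, the trajectory divergences are expected sums of per-state divergences along
trajectories of `π`, so summing the per-state inequality along them (backward induction on the
time step) telescopes the value terms to `V^{μ_t}(x_1) - V^π(x_1)`.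
-/

section Simplex

open Real

variable {A : Type} [Fintype A]

theorem exists_pos_of_mem_stdSimplex {q : A → ℝ} (hq : q ∈ stdSimplex ℝ A) : ∃ a, 0 < q a := by
  by_contra! h
  have : ∑ a, q a = 0 := Finset.sum_eq_zero fun a _ => (h a).antisymm (hq.1 a)
  exact zero_ne_one (this.symm.trans hq.2)

theorem klDist_self (q : A → ℝ) : klDist q q = 0 := by
  refine Finset.sum_eq_zero fun a _ => ?_
  rcases eq_or_ne (q a) 0 with h | h <;> simp [h]

theorem klDist_nonneg {pr q : A → ℝ} (hpr : pr ∈ stdSimplex ℝ A) (hq : q ∈ stdSimplex ℝ A)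
    (hac : ∀ a, q a = 0 → pr a = 0) : 0 ≤ klDist pr q := by
  have key : ∀ a, pr a - q a ≤ pr a * log (pr a / q a) := by
    intro a
    rcases (hpr.1 a).eq_or_lt with h | h
    · simp [← h, hq.1 a]
    have hqa : 0 < q a := (hq.1 a).lt_of_ne' fun h0 => h.ne' (hac a h0)
    have := one_sub_inv_le_log_of_pos (div_pos h hqa)
    rw [inv_div] at this
    calc pr a - q a = pr a * (1 - q a / pr a) := by field_simp
      _ ≤ _ := mul_le_mul_of_nonneg_left this h.le
  have := Finset.sum_le_sum fun a (_ : a ∈ Finset.univ) => key a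
  rw [Finset.sum_sub_distrib, hpr.2, hq.2, sub_self] at this
  exact this

theorem sum_mul_exp_pos {q : A → ℝ} (hq : q ∈ stdSimplex ℝ A) (δ : A → ℝ) :
    0 < ∑ a, q a * exp (δ a) := by
  obtain ⟨a₀, ha₀⟩ := exists_pos_of_mem_stdSimplex hq
  exact Finset.sum_pos' (fun a _ => by have := hq.1 a; positivity)
    ⟨a₀, Finset.mem_univ _, by positivity⟩

theorem abs_le_iSup_abs (δ : A → ℝ) (a : A) : |δ a| ≤ ⨆ b, |δ b| :=
  le_ciSup (f := fun b => |δ b|) (Set.finite_range _).bddAbove a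

theorem log_sum_mul_exp_le {q : A → ℝ} (hq : q ∈ stdSimplex ℝ A) (δ : A → ℝ) :
    log (∑ a, q a * exp (δ a)) ≤ ∑ a, q a * δ a + 2 * (⨆ a, |δ a|) ^ 2 := by
  set M := ⨆ a, |δ a|
  have hδM := abs_le_iSup_abs δ
  have hM : 0 ≤ M := Real.iSup_nonneg fun a => abs_nonneg _
  have hmean : -M ≤ ∑ a, q a * δ a := by
    calc -M = ∑ a, q a * -M := by rw [← Finset.sum_mul, hq.2, one_mul]
      _ ≤ _ := Finset.sum_le_sum fun a _ =>
        mul_le_mul_of_nonneg_left (neg_le_of_abs_le (hδM a)) (hq.1 a)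
  have hZ := sum_mul_exp_pos hq δ
  rcases le_or_gt M 1 with hM1 | hM1
  · have hexp : ∀ a, exp (δ a) ≤ 1 + δ a + M ^ 2 := fun a => by
      have h1 := abs_le.mp (abs_exp_sub_one_sub_id_le ((hδM a).trans hM1))
      have h2 : δ a ^ 2 ≤ M ^ 2 := by rw [← sq_abs]; exact pow_le_pow_left₀ (abs_nonneg _) (hδM a) 2
      linarith [h1.2]
    have hsum : ∑ a, q a * exp (δ a) ≤ 1 + ∑ a, q a * δ a + M ^ 2 := by
      calc ∑ a, q a * exp (δ a) ≤ ∑ a, q a * (1 + δ a + M ^ 2) :=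
            Finset.sum_le_sum fun a _ => mul_le_mul_of_nonneg_left (hexp a) (hq.1 a)
        _ = _ := by simp only [mul_add, Finset.sum_add_distrib, ← Finset.sum_mul, hq.2]; ring
    nlinarith [log_le_sub_one_of_pos hZ]
  · have hsum : ∑ a, q a * exp (δ a) ≤ exp M := by
      calc ∑ a, q a * exp (δ a) ≤ ∑ a, q a * exp M :=
            Finset.sum_le_sum fun a _ => mul_le_mul_of_nonneg_left
              (exp_le_exp.mpr ((le_abs_self _).trans (hδM a))) (hq.1 a)
        _ = exp M := by rw [← Finset.sum_mul, hq.2, one_mul]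
    have := (log_le_log hZ hsum).trans_eq (log_exp M)
    nlinarith

noncomputable def expTilt (q δ : A → ℝ) (a : A) : ℝ :=
  q a * exp (δ a) / ∑ b, q b * exp (δ b)

theorem expTilt_eq_zero {q : A → ℝ} (hq : q ∈ stdSimplex ℝ A) (δ : A → ℝ) {a : A} :
    expTilt q δ a = 0 ↔ q a = 0 := by
  simp [expTilt, (sum_mul_exp_pos hq δ).ne', (exp_pos _).ne']

theorem klDist_expTilt {pr q : A → ℝ} (hpr : ∑ a, pr a = 1) (hq : q ∈ stdSimplex ℝ A)
    (hac : ∀ a, q a = 0 → pr a = 0) (δ : A → ℝ) :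
    klDist pr (expTilt q δ) = klDist pr q - ∑ a, pr a * δ a + log (∑ a, q a * exp (δ a)) := by
  have hZ := (sum_mul_exp_pos hq δ).ne'
  have key : ∀ a, pr a * log (pr a / expTilt q δ a)
      = pr a * log (pr a / q a) - pr a * δ a + pr a * log (∑ b, q b * exp (δ b)) := by
    intro a
    rcases eq_or_ne (pr a) 0 with h | h
    · simp [h]
    have hqa : q a ≠ 0 := fun h0 => h (hac a h0)
    rw [expTilt, div_div_eq_mul_div, log_div (by positivity) (by positivity),
      log_mul h (by positivity), log_div h hqa, log_mul hqa (exp_pos _).ne', log_exp]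
    ring
  simp only [klDist, key, Finset.sum_add_distrib, Finset.sum_sub_distrib, ← Finset.sum_mul, hpr,
    one_mul]

theorem klDist_expTilt_le {pr q : A → ℝ} (hpr : ∑ a, pr a = 1) (hq : q ∈ stdSimplex ℝ A)
    (hac : ∀ a, q a = 0 → pr a = 0) (δ : A → ℝ) :
    klDist pr (expTilt q δ) ≤
      klDist pr q + (∑ a, q a * δ a - ∑ a, pr a * δ a) + 2 * (⨆ a, |δ a|) ^ 2 := by
  rw [klDist_expTilt hpr hq hac]
  linarith [log_sum_mul_exp_le hq δ]

noncomputable def geomMixture (β : ℝ) (pt mu : A → ℝ) (a : A) : ℝ :=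
  pt a ^ (1 - β) * mu a ^ β / ∑ b, pt b ^ (1 - β) * mu b ^ β

variable {β : ℝ} {pt mu : A → ℝ}

theorem geomMixture_normalizer_pos (hpt : pt ∈ stdSimplex ℝ A) (hmu : ∀ a, 0 ≤ mu a)
    (hsupp : ∀ a, mu a = 0 → pt a = 0) : 0 < ∑ a, pt a ^ (1 - β) * mu a ^ β := by
  obtain ⟨a₀, ha₀⟩ := exists_pos_of_mem_stdSimplex hpt
  have hmu₀ : 0 < mu a₀ := (hmu a₀).lt_of_ne' fun h => ha₀.ne' (hsupp a₀ h)
  exact Finset.sum_pos' (fun a _ => by have := hpt.1 a; have := hmu a; positivity)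
    ⟨a₀, Finset.mem_univ _, by positivity⟩

theorem geomMixture_mem_stdSimplex (hpt : pt ∈ stdSimplex ℝ A) (hmu : ∀ a, 0 ≤ mu a)
    (hsupp : ∀ a, mu a = 0 → pt a = 0) : geomMixture β pt mu ∈ stdSimplex ℝ A := by
  have hZ := geomMixture_normalizer_pos (β := β) hpt hmu hsupp
  refine ⟨fun a => ?_, ?_⟩
  · have := hpt.1 a; have := hmu a
    unfold geomMixture; positivity
  · rw [← div_self hZ.ne', Finset.sum_div]; rfl

theorem eq_zero_of_geomMixture_eq_zero (hpt : pt ∈ stdSimplex ℝ A) (hmu : ∀ a, 0 ≤ mu a)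
    (hsupp : ∀ a, mu a = 0 → pt a = 0) {a : A} (ha : geomMixture β pt mu a = 0) : pt a = 0 := by
  by_contra hpt0
  have hZ := geomMixture_normalizer_pos (β := β) hpt hmu hsupp
  have hpta : 0 < pt a := (hpt.1 a).lt_of_ne' hpt0
  have hmua : 0 < mu a := (hmu a).lt_of_ne' fun h => hpt0 (hsupp a h)
  exact (by unfold geomMixture; positivity : geomMixture β pt mu a ≠ 0) ha

theorem geomMixture_eq_zero_of_left (hβ : β ≠ 1) {a : A} (ha : pt a = 0) :
    geomMixture β pt mu a = 0 := by
  simp [geomMixture, ha, zero_rpow (sub_ne_zero.mpr hβ.symm)]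

theorem geomMixture_eq_zero_of_right (hβ : β ≠ 0) {a : A} (ha : mu a = 0) :
    geomMixture β pt mu a = 0 := by
  simp [geomMixture, ha, zero_rpow hβ]

theorem mul_log_div_eq_of_rpow_ne_zero {w x γ : ℝ} (hw : w ≠ 0) (hx : 0 ≤ x) (hxγ : x ^ γ ≠ 0) :
    γ * log (w / x) = γ * log w - log (x ^ γ) := by
  rcases hx.eq_or_lt with rfl | hx
  · have hγ : γ = 0 := by by_contra hγ; exact hxγ (zero_rpow hγ)
    simp [hγ]
  · rw [log_div hw hx.ne', log_rpow hx]; ring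

theorem klDist_geomMixture (hpt : ∀ a, 0 ≤ pt a) (hmu : ∀ a, 0 ≤ mu a) {w : A → ℝ}
    (hw : ∑ a, w a = 1) (hac : ∀ a, w a ≠ 0 → geomMixture β pt mu a ≠ 0) :
    klDist w (geomMixture β pt mu) = (1 - β) * klDist w pt + β * klDist w mu
      + log (∑ a, pt a ^ (1 - β) * mu a ^ β) := by
  set Z := ∑ a, pt a ^ (1 - β) * mu a ^ β
  have key : ∀ a, w a * log (w a / geomMixture β pt mu a) = (1 - β) * (w a * log (w a / pt a))
      + β * (w a * log (w a / mu a)) + w a * log Z := by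
    intro a
    rcases eq_or_ne (w a) 0 with h | h
    · simp [h]
    have hmt := hac a h
    have hZ : Z ≠ 0 := fun hZ => hmt (by simp [geomMixture, Z, hZ])
    have hnum : pt a ^ (1 - β) * mu a ^ β ≠ 0 := fun h0 => hmt (by simp [geomMixture, h0])
    obtain ⟨hpt', hmu'⟩ := mul_ne_zero_iff.mp hnum
    rw [mul_left_comm (1 - β), mul_left_comm β, mul_log_div_eq_of_rpow_ne_zero h (hpt a) hpt',
      mul_log_div_eq_of_rpow_ne_zero h (hmu a) hmu', geomMixture, div_div_eq_mul_div,
      log_div (mul_ne_zero h hZ) hnum, log_mul h hZ, log_mul hpt' hmu']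
    ring
  simp only [klDist, key, Finset.sum_add_distrib, ← Finset.mul_sum, ← Finset.sum_mul, hw, one_mul]

-- Lemma 1 of Munos et al.
theorem klDist_geomMixture_le (hβ₀ : 0 < β) (hβ₁ : β ≤ 1) {pr : A → ℝ}
    (hpr : ∑ a, pr a = 1) (hpt : pt ∈ stdSimplex ℝ A) (hmu : mu ∈ stdSimplex ℝ A)
    (hsupp : ∀ a, mu a = 0 → pt a = 0) (hac : ∀ a, pt a = 0 → pr a = 0) :
    klDist pr (geomMixture β pt mu) ≤
      (1 - β) * klDist pr pt + β * klDist pr mu - β * klDist (geomMixture β pt mu) mu := by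
  set mt := geomMixture β pt mu
  have hmt := geomMixture_mem_stdSimplex (β := β) hpt hmu.1 hsupp
  have hA := klDist_geomMixture (β := β) hpt.1 hmu.1 hpr fun a ha h0 =>
    ha (hac a (eq_zero_of_geomMixture_eq_zero hpt hmu.1 hsupp h0))
  -- with `w = mt` the left side vanishes, leaving `-log Z = (1 - β) KL(mt‖pt) + β KL(mt‖mu)`
  have hB := klDist_geomMixture hpt.1 hmu.1 hmt.2 fun a ha => ha
  rw [klDist_self] at hB
  have hmt_pt : 0 ≤ (1 - β) * klDist mt pt := by
    rcases hβ₁.eq_or_lt with rfl | hβ₁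
    · simp
    exact mul_nonneg (by linarith) (klDist_nonneg hmt hpt fun a ha =>
      geomMixture_eq_zero_of_left hβ₁.ne ha)
  have hmt_mu : 0 ≤ β * klDist mt mu := mul_nonneg hβ₀.le (klDist_nonneg hmt hmu fun a ha =>
    geomMixture_eq_zero_of_right hβ₀.ne' ha)
  linarith

variable {η : ℝ} {pr : A → ℝ}

theorem klDist_expTilt_geomMixture_le (hβ₀ : 0 < β) (hβ₁ : β ≤ 1) (hη : 0 ≤ η)
    (hpr : ∑ a, pr a = 1) (hpt : pt ∈ stdSimplex ℝ A) (hmu : mu ∈ stdSimplex ℝ A)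
    (hsupp : ∀ a, mu a = 0 → pt a = 0) (hac : ∀ a, pt a = 0 → pr a = 0) (Q : A → ℝ) :
    klDist pr (expTilt (geomMixture β pt mu) fun a => η * Q a) ≤
      (1 - β) * klDist pr pt + β * klDist pr mu - β * klDist (geomMixture β pt mu) mu
        + η * (geomMixture β pt mu ⬝ᵥ Q - pr ⬝ᵥ Q) + 2 * η ^ 2 * (⨆ a, |Q a|) ^ 2 := by
  have hmd := klDist_expTilt_le hpr (geomMixture_mem_stdSimplex (β := β) hpt hmu.1 hsupp)
    (fun a ha => hac a (eq_zero_of_geomMixture_eq_zero hpt hmu.1 hsupp ha))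
    fun a => η * Q a
  have hsup : ⨆ a, |η * Q a| = η * ⨆ a, |Q a| := by
    simp_rw [abs_mul, abs_of_nonneg hη, Real.mul_iSup_of_nonneg hη]
  rw [hsup] at hmd
  simp only [mul_left_comm _ η, ← Finset.mul_sum] at hmd
  have := klDist_geomMixture_le hβ₀ hβ₁ hpr hpt hmu hsupp hac
  simp only [dotProduct]
  linarith

end Simplex

theorem sum_pi_fin_succ {Z M : Type*} [Fintype Z] [AddCommMonoid M] {n : ℕ}
    (g : (Fin (n + 1) → Z) → M) :
    ∑ s, g s = ∑ z, ∑ s : Fin n → Z, g (Fin.cons z s) := by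
  rw [← (Fin.consEquiv fun _ => Z).sum_comp, Fintype.sum_prod_type]
  rfl

noncomputable def expectedReturn {S A : Type} [Fintype S] [Fintype A] [DecidableEq S]
    (p : ℕ → S → A → S → ℝ) (π : ℕ → S → A → ℝ) (r : S → ℝ) (c : ℕ → S → A → ℝ) (h m : ℕ)
    (x : S) : ℝ :=
  ∑ s : Fin (m + 1) → S, ∑ a : Fin m → A,
    pathProb p π h x m s a * (r (s (Fin.last m)) + ∑ i : Fin m, c (h + i) (s i.castSucc) (a i))

section Trajectory

open Matrix

variable {S A : Type} [DecidableEq S] {p : ℕ → S → A → S → ℝ} {π : ℕ → S → A → ℝ}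

variable [Fintype S]

theorem pathProb_cons_s12 (h : ℕ) (x x₀ : S) (m : ℕ) (s : Fin (m + 1) → S) (y : A) (a : Fin m → A) :
    pathProb p π h x (m + 1) (Fin.cons x₀ s) (Fin.cons y a) =
      if x₀ = x then π h x y * ∑ x', p h x y x' * pathProb p π (h + 1) x' m s a else 0 := by
  split_ifs with hx
  · subst hx
    rw [Finset.sum_eq_single (s 0) (fun x' _ hx' => by simp [pathProb, Ne.symm hx'])
      (by simp)]
    simp only [pathProb, Fin.prod_univ_succ, Fin.cons_zero, Fin.castSucc_zero, Fin.cons_succ,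
      ← Fin.succ_castSucc, Fin.val_zero, Fin.val_succ, if_true, add_zero, one_mul, add_assoc,
      add_comm 1]
    ring
  · simp [pathProb, hx]

variable [Fintype A] {ρ σ ν μ : ℕ → S → A → ℝ} {r : S → ℝ} {α η : ℝ} {H : ℕ}
  {g : ℕ → S → ℝ}

theorem sum_pathProb_zero_mul (h : ℕ) (x : S) (φ : (Fin 1 → S) → (Fin 0 → A) → ℝ) :
    ∑ s, ∑ a, pathProb p π h x 0 s a * φ s a = φ (fun _ => x) Fin.elim0 := by
  rw [Fintype.sum_eq_single (fun _ => x)]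
  · simp [pathProb, Subsingleton.elim _ (Fin.elim0 : Fin 0 → A)]
  · intro s hs
    have : s 0 ≠ x := fun h => hs (funext fun i => by rw [Subsingleton.elim (α := Fin 1) i 0, h])
    simp [pathProb, this]

theorem sum_pathProb_succ_mul (h : ℕ) (x : S) (m : ℕ)
    (φ : (Fin (m + 2) → S) → (Fin (m + 1) → A) → ℝ) :
    ∑ s, ∑ a, pathProb p π h x (m + 1) s a * φ s a =
      ∑ y, π h x y * ∑ x', p h x y x' *
        ∑ s, ∑ a, pathProb p π (h + 1) x' m s a * φ (Fin.cons x s) (Fin.cons y a) := by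
  simp_rw [sum_pi_fin_succ (Z := A)]
  rw [sum_pi_fin_succ (Z := S), Fintype.sum_eq_single x fun x₀ hx₀ => by simp [pathProb_cons_s12, hx₀]]
  simp only [pathProb_cons_s12, if_true, Finset.mul_sum, Finset.sum_mul]
  rw [Finset.sum_comm]
  refine Finset.sum_congr rfl fun y _ => ?_
  rw [Finset.sum_comm (s := Finset.univ (α := S))]
  refine Finset.sum_congr rfl fun s _ => ?_
  rw [Finset.sum_comm]
  exact Finset.sum_congr rfl fun a _ => Finset.sum_congr rfl fun x' _ => by ring

theorem sum_pathProb (hp : ∀ h x y, p h x y ∈ stdSimplex ℝ S)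
    (hπ : ∀ h x, π h x ∈ stdSimplex ℝ A) (h : ℕ) (x : S) (m : ℕ) :
    ∑ s, ∑ a, pathProb p π h x m s a = 1 := by
  induction m generalizing h x with
  | zero => simpa using sum_pathProb_zero_mul (p := p) (π := π) h x fun _ _ => 1
  | succ m ih =>
    simpa [ih, (hp _ _ _).2, (hπ _ _).2] using
      sum_pathProb_succ_mul (p := p) (π := π) h x m fun _ _ => 1

theorem expectedReturn_zero (r : S → ℝ) (c : ℕ → S → A → ℝ) (h : ℕ) (x : S) :
    expectedReturn p π r c h 0 x = r x := by
  rw [expectedReturn, sum_pathProb_zero_mul]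
  simp

theorem expectedReturn_succ (hp : ∀ h x y, p h x y ∈ stdSimplex ℝ S)
    (hπ : ∀ h x, π h x ∈ stdSimplex ℝ A) (r : S → ℝ) (c : ℕ → S → A → ℝ) (h m : ℕ) (x : S) :
    expectedReturn p π r c h (m + 1) x =
      π h x ⬝ᵥ c h x + (π h x ᵥ* of (p h x)) ⬝ᵥ expectedReturn p π r c (h + 1) m := by
  have hshift : ∀ (y : A) (s : Fin (m + 1) → S) (a : Fin m → A),
      r ((Fin.cons x s : Fin (m + 2) → S) (Fin.last (m + 1))) + ∑ i : Fin (m + 1),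
        c (h + i) ((Fin.cons x s : Fin (m + 2) → S) i.castSucc) ((Fin.cons y a : Fin (m + 1) → A) i)
      = c h x y + (r (s (Fin.last m)) + ∑ i : Fin m, c (h + 1 + i) (s i.castSucc) (a i)) := by
    intro y s a
    simp only [Fin.sum_univ_succ, ← Fin.succ_last, ← Fin.succ_castSucc, Fin.cons_succ,
      Fin.castSucc_zero, Fin.cons_zero, Fin.val_zero, Fin.val_succ, add_zero, add_assoc,
      add_comm 1]
    ring
  have hinner : ∀ y x', ∑ s, ∑ a, pathProb p π (h + 1) x' m s a *
      (c h x y + (r (s (Fin.last m)) + ∑ i : Fin m, c (h + 1 + i) (s i.castSucc) (a i)))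
      = c h x y + expectedReturn p π r c (h + 1) m x' := by
    intro y x'
    simp only [mul_add, Finset.sum_add_distrib, ← Finset.sum_mul, sum_pathProb hp hπ, one_mul,
      expectedReturn]
  rw [← dotProduct_mulVec, ← dotProduct_add, expectedReturn, sum_pathProb_succ_mul]
  simp only [hshift, hinner]
  refine Finset.sum_congr rfl fun y _ => ?_
  simp only [Pi.add_apply, mulVec, dotProduct, of_apply, mul_add, Finset.sum_add_distrib,
    ← Finset.sum_mul, (hp h x y).2, one_mul]

theorem sum_pathProb_mul_log_div (hac : ∀ h x y, ρ h x y = 0 → π h x y = 0) (h : ℕ) (x : S)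
    (m : ℕ) :
    ∑ s, ∑ a, pathProb p π h x m s a * Real.log (pathProb p π h x m s a / pathProb p ρ h x m s a)
      = expectedReturn p π 0 (fun k x y => Real.log (π k x y / ρ k x y)) h m x := by
  refine Finset.sum_congr rfl fun s _ => Finset.sum_congr rfl fun a _ => ?_
  rcases eq_or_ne (pathProb p π h x m s a) 0 with h0 | h0
  · simp [h0]
  have hs : s 0 = x := by by_contra hs; simp [pathProb, hs] at h0
  have hstep := Finset.prod_ne_zero_iff.mp (by simpa [pathProb, hs] using h0)
  simp only [pathProb, hs, if_true, one_mul, Pi.zero_apply, zero_add]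
  congr 1
  rw [← Finset.prod_div_distrib, Real.log_prod fun i _ => ?_]
  · refine Finset.sum_congr rfl fun i _ => ?_
    rw [mul_div_mul_right _ _ (mul_ne_zero_iff.mp (hstep i (Finset.mem_univ _))).2]
  · obtain ⟨hπi, hpi⟩ := mul_ne_zero_iff.mp (hstep i (Finset.mem_univ _))
    exact div_ne_zero (mul_ne_zero hπi hpi) (mul_ne_zero (fun h => hπi (hac _ _ _ h)) hpi)

theorem Vreg_eq_expectedReturn (h : ℕ) (x : S) :
    Vreg p π μ r α H h x =
      expectedReturn p π r (fun k x _ => -(α * klDist (π k x) (μ k x))) h (H - h) x := by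
  simp only [Vreg, expectedReturn, Finset.mul_sum, Finset.sum_neg_distrib, sub_eq_add_neg]

theorem Vreg_horizon (x : S) : Vreg p π μ r α H H x = r x := by
  rw [Vreg_eq_expectedReturn, Nat.sub_self, expectedReturn_zero]

theorem Qreg_eq (hp : ∀ h x y, p h x y ∈ stdSimplex ℝ S) (hπ : ∀ h x, π h x ∈ stdSimplex ℝ A)
    (h : ℕ) (x : S) (y : A) :
    Qreg p π μ r α H h x y =
      -(α * klDist (π h x) (μ h x)) + p h x y ⬝ᵥ Vreg p π μ r α H (h + 1) := by
  have hnext : ∀ x', ∑ s : Fin (H - (h + 1) + 1) → S, ∑ a : Fin (H - (h + 1)) → A,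
      pathProb p π (h + 1) x' (H - (h + 1)) s a *
        (r (s (Fin.last (H - (h + 1)))) - α * (klDist (π h x) (μ h x) +
          ∑ i : Fin (H - (h + 1)),
            klDist (π (h + 1 + i) (s i.castSucc)) (μ (h + 1 + i) (s i.castSucc))))
      = Vreg p π μ r α H (h + 1) x' - α * klDist (π h x) (μ h x) := by
    intro x'
    rw [Vreg, ← one_mul (α * klDist _ _), ← sum_pathProb hp hπ (h + 1) x' (H - (h + 1))]
    simp only [Finset.sum_mul, ← Finset.sum_sub_distrib]
    exact Finset.sum_congr rfl fun s _ => Finset.sum_congr rfl fun a _ => by ring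
  simp only [Qreg, hnext]
  simp only [dotProduct, mul_sub, Finset.sum_sub_distrib, ← Finset.sum_mul, (hp h x y).2]
  ring

theorem dotProduct_Qreg (hp : ∀ h x y, p h x y ∈ stdSimplex ℝ S)
    (hπ : ∀ h x, π h x ∈ stdSimplex ℝ A) {u : A → ℝ} (hu : ∑ y, u y = 1) (h : ℕ) (x : S) :
    u ⬝ᵥ Qreg p π μ r α H h x =
      -(α * klDist (π h x) (μ h x)) + (u ᵥ* of (p h x)) ⬝ᵥ Vreg p π μ r α H (h + 1) := by
  have hQ : Qreg p π μ r α H h x =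
      (fun _ => -(α * klDist (π h x) (μ h x))) + of (p h x) *ᵥ Vreg p π μ r α H (h + 1) :=
    funext (Qreg_eq hp hπ h x)
  rw [hQ, dotProduct_add, dotProduct_mulVec]
  simp [dotProduct, ← Finset.sum_mul, hu]

theorem Vreg_eq_dotProduct_Qreg (hp : ∀ h x y, p h x y ∈ stdSimplex ℝ S)
    (hπ : ∀ h x, π h x ∈ stdSimplex ℝ A) {h : ℕ} (hh : h < H) (x : S) :
    Vreg p π μ r α H h x = π h x ⬝ᵥ Qreg p π μ r α H h x := by
  rw [dotProduct_Qreg hp hπ (hπ h x).2, Vreg_eq_expectedReturn,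
    show H - h = H - (h + 1) + 1 by omega, expectedReturn_succ hp hπ]
  simp [dotProduct, ← Finset.sum_mul, (hπ h x).2, Vreg_eq_expectedReturn]

theorem expectedReturn_log_div_le_of_klDist_le (hp : ∀ h x y, p h x y ∈ stdSimplex ℝ S)
    (hπ : ∀ h x, π h x ∈ stdSimplex ℝ A) (hν : ∀ h x, ν h x ∈ stdSimplex ℝ A)
    (hlocal : ∀ h < H, ∀ x, klDist (π h x) (ρ h x) ≤
      (1 - η * α) * klDist (π h x) (σ h x) + η * α * klDist (π h x) (μ h x)
        - η * α * klDist (ν h x) (μ h x)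
        + η * (ν h x ⬝ᵥ Qreg p ν μ r α H h x - π h x ⬝ᵥ Qreg p ν μ r α H h x)
        + 2 * η ^ 2 * g h x)
    {h m : ℕ} (hhm : h + m = H) (x : S) :
    expectedReturn p π 0 (fun k x y => Real.log (π k x y / ρ k x y)) h m x ≤
      (1 - η * α) * expectedReturn p π 0 (fun k x y => Real.log (π k x y / σ k x y)) h m x
        + 2 * η ^ 2 * expectedReturn p π 0 (fun k x _ => g k x) h m x
        + η * (Vreg p ν μ r α H h x - Vreg p π μ r α H h x) := by
  induction m generalizing h x with
  | zero =>
    obtain rfl : h = H := hhm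
    simp [expectedReturn_zero, Vreg_horizon]
  | succ m ih =>
    have hh : h < H := by omega
    set w := π h x ᵥ* of (p h x)
    have hw : 0 ≤ w := fun x' => Finset.sum_nonneg fun y _ =>
      mul_nonneg ((hπ h x).1 y) ((hp h x y).1 x')
    have hnext : w ⬝ᵥ expectedReturn p π 0 (fun k x y => Real.log (π k x y / ρ k x y)) (h + 1) m
        ≤ w ⬝ᵥ ((1 - η * α) • expectedReturn p π 0 (fun k x y => Real.log (π k x y / σ k x y))
          (h + 1) m + (2 * η ^ 2) • expectedReturn p π 0 (fun k x _ => g k x) (h + 1) m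
          + η • (Vreg p ν μ r α H (h + 1) - Vreg p π μ r α H (h + 1))) :=
      dotProduct_le_dotProduct_of_nonneg_left (fun x' => ih (by omega) x') hw
    simp only [dotProduct_add, dotProduct_smul, dotProduct_sub, smul_eq_mul] at hnext
    have hstep := hlocal h hh x
    rw [dotProduct_Qreg hp hν (hπ h x).2] at hstep
    have hg : π h x ⬝ᵥ (fun _ => g h x) = g h x := by
      simp [dotProduct, ← Finset.sum_mul, (hπ h x).2]
    rw [expectedReturn_succ hp hπ, expectedReturn_succ hp hπ, expectedReturn_succ hp hπ,
      Vreg_eq_dotProduct_Qreg hp hν hh, Vreg_eq_dotProduct_Qreg hp hπ hh,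
      dotProduct_Qreg hp hπ (hπ h x).2, hg]
    change klDist (π h x) (ρ h x) + _ ≤ (1 - η * α) * (klDist (π h x) (σ h x) + _) + _ + _
    linear_combination hstep + hnext

end Trajectory

theorem mixture_md_fundamental_inequality_general
    (p : ℕ → X → Y → X → ℝ) (μ πt μt πnext π : ℕ → X → Y → ℝ) (r : X → ℝ)
    (α η : ℝ) (x1 : X) (H : ℕ)
    (hα : 0 < α) (hη : 0 < η) (hηα : η * α ≤ 1)
    (hp : (∀ h x y x', 0 ≤ p h x y x') ∧ ∀ h x y, ∑ x', p h x y x' = 1)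
    (hμ : (∀ h x y, 0 ≤ μ h x y) ∧ ∀ h x, ∑ y, μ h x y = 1)
    (hπt : (∀ h x y, 0 ≤ πt h x y) ∧ ∀ h x, ∑ y, πt h x y = 1)
    (hπ : (∀ h x y, 0 ≤ π h x y) ∧ ∀ h x, ∑ y, π h x y = 1)
    (hsupp : ∀ h x y, μ h x y = 0 → πt h x y = 0)
    (habs : ∀ h x y, πt h x y = 0 → π h x y = 0)
    (hmix : ∀ h x y, μt h x y =
      πt h x y ^ (1 - η * α) * μ h x y ^ (η * α) /
        ∑ y', πt h x y' ^ (1 - η * α) * μ h x y' ^ (η * α))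
    (hnext : ∀ h x y, πnext h x y =
      μt h x y * Real.exp (η * Qreg p μt μ r α H h x y) /
        ∑ y', μt h x y' * Real.exp (η * Qreg p μt μ r α H h x y')) :
    KLtraj p π πnext x1 H ≤
      (1 - η * α) * KLtraj p π πt x1 H +
        2 * η ^ 2 *
          (∑ s : Fin (H + 1) → X, ∑ a : Fin H → Y,
            pathProb p π 0 x1 H s a *
              ∑ h : Fin H, (⨆ y : Y, |Qreg p μt μ r α H h (s h.castSucc) y|) ^ 2) +
        η * (Vreg p μt μ r α H 0 x1 - Vreg p π μ r α H 0 x1) := by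
  have hp' : ∀ h x y, p h x y ∈ stdSimplex ℝ X := fun h x y => ⟨hp.1 h x y, hp.2 h x y⟩
  have hμ' : ∀ h x, μ h x ∈ stdSimplex ℝ Y := fun h x => ⟨hμ.1 h x, hμ.2 h x⟩
  have hπt' : ∀ h x, πt h x ∈ stdSimplex ℝ Y := fun h x => ⟨hπt.1 h x, hπt.2 h x⟩
  have hπ' : ∀ h x, π h x ∈ stdSimplex ℝ Y := fun h x => ⟨hπ.1 h x, hπ.2 h x⟩
  have hμt : ∀ h x, μt h x = geomMixture (η * α) (πt h x) (μ h x) := fun h x => funext (hmix h x)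
  have hμt' : ∀ h x, μt h x ∈ stdSimplex ℝ Y := fun h x =>
    hμt h x ▸ geomMixture_mem_stdSimplex (hπt' h x) (hμ' h x).1 (hsupp h x)
  have hnext' : ∀ h x, πnext h x = expTilt (μt h x) fun y => η * Qreg p μt μ r α H h x y :=
    fun h x => funext (hnext h x)
  have hac : ∀ h x y, πnext h x y = 0 → π h x y = 0 := fun h x y hy => by
    rw [hnext', expTilt_eq_zero (hμt' h x), hμt] at hy
    exact habs h x y (eq_zero_of_geomMixture_eq_zero (hπt' h x) (hμ' h x).1 (hsupp h x) hy)
  have key := expectedReturn_log_div_le_of_klDist_le (ρ := πnext) (σ := πt)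
    (g := fun h x => (⨆ y, |Qreg p μt μ r α H h x y|) ^ 2) hp' hπ' hμt'
    (fun h _ x => by
      rw [hnext' h x, hμt h x]
      exact klDist_expTilt_geomMixture_le (mul_pos hη hα) hηα hη.le (hπ.2 h x) (hπt' h x)
        (hμ' h x) (hsupp h x) (habs h x) _)
    (zero_add H) x1
  have hE : ∑ s : Fin (H + 1) → X, ∑ a : Fin H → Y, pathProb p π 0 x1 H s a *
      ∑ h : Fin H, (⨆ y : Y, |Qreg p μt μ r α H h (s h.castSucc) y|) ^ 2 =
      expectedReturn p π 0 (fun h x _ => (⨆ y, |Qreg p μt μ r α H h x y|) ^ 2) 0 H x1 := by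
    simp only [expectedReturn, Pi.zero_apply, zero_add]
  rw [KLtraj, KLtraj, sum_pathProb_mul_log_div hac, sum_pathProb_mul_log_div habs, hE]
  exact key

/-- **Fundamental inequality of mixture mirror descent policy optimization
(Lemma E.7).** With the geometric mixture policy
`μ_t(y|x) ∝ π_t(y|x)^{1−ηα} μ(y|x)^{ηα}` and the update
`π_{t+1}(y|x) ∝ μ_t(y|x) exp(η Q_α^{μ_t,t}(x,y))`, for any policy `π`:
`KL_p(π‖π_{t+1}) ≤ (1 − ηα) KL_p(π‖π_t)
  + 2η² E_{π,p}[Σ_h ‖Q_α^{μ_t,t}(x_h,·)‖_∞²]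
  + η (V_α^{μ_t,t}(x_1) − V_α^{π,t}(x_1))`. -/
theorem mixture_md_fundamental_inequality
    (p : ℕ → X → Y → X → ℝ) (μ πt μt πnext π : ℕ → X → Y → ℝ) (r : X → ℝ)
    (α η : ℝ) (x1 : X) (H : ℕ)
    (hα : 0 < α) (hη : 0 < η) (hηα : η * α ≤ 1)
    (hr : ∀ x, 0 ≤ r x ∧ r x ≤ 1)
    (hp : (∀ h x y x', 0 ≤ p h x y x') ∧ ∀ h x y, ∑ x', p h x y x' = 1)
    (hμ : (∀ h x y, 0 ≤ μ h x y) ∧ ∀ h x, ∑ y, μ h x y = 1)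
    (hπt : (∀ h x y, 0 ≤ πt h x y) ∧ ∀ h x, ∑ y, πt h x y = 1)
    (hπ : (∀ h x y, 0 ≤ π h x y) ∧ ∀ h x, ∑ y, π h x y = 1)
    (hsupp : ∀ h x y, μ h x y = 0 → πt h x y = 0)
    (habs : ∀ h x y, πt h x y = 0 → π h x y = 0)
    (hmix : ∀ h x y, μt h x y =
      πt h x y ^ (1 - η * α) * μ h x y ^ (η * α) /
        ∑ y', πt h x y' ^ (1 - η * α) * μ h x y' ^ (η * α))
    (hnext : ∀ h x y, πnext h x y =
      μt h x y * Real.exp (η * Qreg p μt μ r α H h x y) /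
        ∑ y', μt h x y' * Real.exp (η * Qreg p μt μ r α H h x y')) :
    KLtraj p π πnext x1 H ≤
      (1 - η * α) * KLtraj p π πt x1 H +
        2 * η ^ 2 *
          (∑ s : Fin (H + 1) → X, ∑ a : Fin H → Y,
            pathProb p π 0 x1 H s a *
              ∑ h : Fin H, (⨆ y : Y, |Qreg p μt μ r α H h (s h.castSucc) y|) ^ 2) +
        η * (Vreg p μt μ r α H 0 x1 - Vreg p π μ r α H 0 x1) :=
  mixture_md_fundamental_inequality_general p μ πt μt πnext π r α η x1 H hα hη hηα hp hμ hπt hπ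
    hsupp habs hmix hnext
end

section
/- One-step mirror descent KL inequality: let π⁻ ∈ Δ(Y) be a probability distribution on a finite set Y, δ : Y → ℝ a bounded function, and define π⁺(y) = π⁻(y) e^{δ(y)} / Σ_{y'} π⁻(y') e^{δ(y')}. Then for any π ∈ Δ(Y) absolutely continuous with respect to π⁻: KL(π||π⁺) ≤ KL(π||π⁻) + ⟨π⁻ − π, δ⟩ + 2‖δ‖_∞². -/
/-! Since `π⁺` is an exponential tilt of `π⁻` with normaliser `Z = E_{π⁻}[e^δ]`, the difference
`KL(π‖π⁺) - KL(π‖π⁻)` is exactly `log Z - ⟨π, δ⟩`, so the inequality reduces to the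
log-partition bound `log E_{π⁻}[e^δ] ≤ E_{π⁻}[δ] + 2‖δ‖_∞²`. -/

open Finset

section

open Real

lemma mul_log_div_mul_exp_div {a b d Z : ℝ} (hZ : Z ≠ 0) (hab : b = 0 → a = 0) :
    a * log (a / (b * exp d / Z)) = a * log (a / b) + a * (log Z - d) := by
  rcases eq_or_ne a 0 with rfl | ha
  · simp
  have hb : b ≠ 0 := mt hab ha
  rw [div_div_eq_mul_div, log_div (mul_ne_zero ha hZ) (mul_ne_zero hb (exp_ne_zero d)),
    log_mul ha hZ, log_mul hb (exp_ne_zero d), log_exp, log_div ha hb]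
  ring

variable {Y : Type*} [Fintype Y] {p : Y → ℝ}

lemma sum_mul_const_of_sum_eq_one (hp : ∑ y, p y = 1) (c : ℝ) : ∑ y, p y * c = c := by
  rw [← sum_mul, hp, one_mul]

lemma sum_mul_exp_pos_s14 (hp0 : ∀ y, 0 ≤ p y) (hp1 : ∑ y, p y = 1) (f : Y → ℝ) :
    0 < ∑ y, p y * exp (f y) := by
  obtain ⟨y, -, hy⟩ := exists_ne_zero_of_sum_ne_zero (hp1 ▸ one_ne_zero)
  exact sum_pos' (fun z _ => mul_nonneg (hp0 z) (exp_pos _).le)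
    ⟨y, mem_univ y, mul_pos ((hp0 y).lt_of_ne' hy) (exp_pos _)⟩

lemma log_sum_mul_exp_le_s14 (hp0 : ∀ y, 0 ≤ p y) (hp1 : ∑ y, p y = 1) {f : Y → ℝ} {D : ℝ}
    (hf : ∀ y, |f y| ≤ D) :
    log (∑ y, p y * exp (f y)) ≤ ∑ y, p y * f y + 2 * D ^ 2 := by
  have hZ := sum_mul_exp_pos_s14 hp0 hp1 f
  -- For `D ≤ 1` use `e^x ≤ 1 + x + x²` and `log Z ≤ Z - 1`; for `D > 1` the crude bounds
  -- `log Z ≤ D` and `-D ≤ E[f]` already suffice.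
  rcases le_or_gt D 1 with hD1 | hD1
  · have hexp : ∀ y, exp (f y) ≤ 1 + f y + D ^ 2 := fun y => by
      have hquad := (abs_le.1 (abs_exp_sub_one_sub_id_le ((hf y).trans hD1))).2
      have hsq : f y ^ 2 ≤ D ^ 2 := sq_le_sq' (neg_le_of_abs_le (hf y)) (le_of_abs_le (hf y))
      linarith
    have hZle : ∑ y, p y * exp (f y) ≤ 1 + ∑ y, p y * f y + D ^ 2 := by
      calc ∑ y, p y * exp (f y) ≤ ∑ y, p y * (1 + f y + D ^ 2) :=
            sum_le_sum fun y _ => mul_le_mul_of_nonneg_left (hexp y) (hp0 y)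
        _ = 1 + ∑ y, p y * f y + D ^ 2 := by
            simp only [mul_add, sum_add_distrib, mul_one, hp1, sum_mul_const_of_sum_eq_one hp1]
    linarith [log_le_sub_one_of_pos hZ, sq_nonneg D]
  · have hZle : ∑ y, p y * exp (f y) ≤ exp D := by
      calc ∑ y, p y * exp (f y) ≤ ∑ y, p y * exp D :=
            sum_le_sum fun y _ =>
              mul_le_mul_of_nonneg_left (exp_le_exp.2 (le_of_abs_le (hf y))) (hp0 y)
        _ = exp D := sum_mul_const_of_sum_eq_one hp1 _
    have hlog : log (∑ y, p y * exp (f y)) ≤ D := by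
      simpa using log_le_log hZ hZle
    have hmean : -D ≤ ∑ y, p y * f y := by
      calc -D = ∑ y, p y * (-D) := (sum_mul_const_of_sum_eq_one hp1 _).symm
        _ ≤ ∑ y, p y * f y :=
          sum_le_sum fun y _ => mul_le_mul_of_nonneg_left (neg_le_of_abs_le (hf y)) (hp0 y)
    nlinarith

lemma klDist_eq_of_eq_mul_exp_div {Y : Type} [Fintype Y] {p q q' δ : Y → ℝ} {Z : ℝ}
    (hZ : Z ≠ 0) (hp : ∑ y, p y = 1) (habs : ∀ y, q y = 0 → p y = 0)
    (hq' : ∀ y, q' y = q y * exp (δ y) / Z) :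
    klDist p q' = klDist p q + log Z - ∑ y, p y * δ y := by
  simp only [klDist, hq', mul_log_div_mul_exp_div hZ (habs _), sum_add_distrib, mul_sub,
    sum_sub_distrib, ← sum_mul, hp, one_mul]
  ring

end

theorem one_step_md_kl_inequality_general
    {Y : Type} [Fintype Y]
    (πm πp π : Y → ℝ) (δ : Y → ℝ)
    (hπm : (∀ y, 0 ≤ πm y) ∧ ∑ y, πm y = 1)
    (hπ : (∀ y, 0 ≤ π y) ∧ ∑ y, π y = 1)
    (habs : ∀ y, πm y = 0 → π y = 0)
    (hπp : ∀ y, πp y = πm y * Real.exp (δ y) / ∑ y', πm y' * Real.exp (δ y')) :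
    klDist π πp ≤
      klDist π πm + (∑ y, (πm y - π y) * δ y) + 2 * (⨆ y, |δ y|) ^ 2 := by
  have hδ : ∀ y, |δ y| ≤ ⨆ y, |δ y| := le_ciSup (Set.finite_range _).bddAbove
  have hZ := (sum_mul_exp_pos_s14 hπm.1 hπm.2 δ).ne'
  rw [klDist_eq_of_eq_mul_exp_div hZ hπ.2 habs hπp]
  have hlog := log_sum_mul_exp_le_s14 hπm.1 hπm.2 hδ
  simp only [sub_mul, sum_sub_distrib]
  linarith

/-- **One-step mirror descent KL inequality (Lemma 2 of Munos et al.).** For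
`π⁺(y) = π⁻(y) e^{δ(y)} / Z` and any `π` absolutely continuous w.r.t. `π⁻`:
`KL(π‖π⁺) ≤ KL(π‖π⁻) + ⟨π⁻ − π, δ⟩ + 2‖δ‖_∞²`. -/
theorem one_step_md_kl_inequality
    {Y : Type} [Fintype Y] [Nonempty Y]
    (πm πp π : Y → ℝ) (δ : Y → ℝ)
    (hπm : (∀ y, 0 ≤ πm y) ∧ ∑ y, πm y = 1)
    (hπ : (∀ y, 0 ≤ π y) ∧ ∑ y, π y = 1)
    (habs : ∀ y, πm y = 0 → π y = 0)
    (hπp : ∀ y, πp y = πm y * Real.exp (δ y) / ∑ y', πm y' * Real.exp (δ y')) :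
    klDist π πp ≤
      klDist π πm + (∑ y, (πm y - π y) * δ y) + 2 * (⨆ y, |δ y|) ^ 2 :=
  one_step_md_kl_inequality_general πm πp π δ hπm hπ habs hπp
end

section
/- Lower bound on the log-likelihood ratio along mirror descent iterates: consider the scalar recursion on L_t(y|x) = log(π_t(y|x)/μ(y|x)) induced by the MD update π_{t+1}(y|x) ∝ μ(y|x)^{αη_t} π_t(y|x)^{1−αη_t} e^{η_t Q_t(x,y)} with π_1 = μ, step sizes η_t = 2/(α(t+2)), and Q-values satisfying α H log μ_min ≤ Q_t(x,y) ≤ 1 and log-partition bound log Σ_{y'} π_t(y'|x) e^{η_t(Q_t(x,y') − α L_t(y'|x))} ≤ η_t. Then for all t and all (x,y) in the support: H log μ_min − 1/α ≤ L_t(y|x) ≤ log(1/μ_min). -/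
/-!
Writing the mirror descent update as `π_{t+1}(y) = π_t(y) e^{η_t (Q_t(y) - α L_t(y))} / Z_t` on the
support of `μ`, the log-ratio obeys `L_{t+1} = (1 - αη_t) L_t + η_t Q_t - log Z_t`, and the
log-partition bound `log Z_t ≤ η_t` together with `Q_t ≥ α H log μ_min` turns this into the affine
inequality `L_{t+1} ≥ (1 - αη_t) L_t + αη_t c` with `c = H log μ_min - 1/α ≤ 0 = L_1`. Since
`αη_t ≤ 1`, the lower bound `c` propagates. The upper bound is just `π_t ≤ 1` and `μ ≥ μ_min`.
-/

open Finset

theorem le_of_le_affine_step {u γ : ℕ → ℝ} {c : ℝ} {n₀ : ℕ} (h₀ : c ≤ u n₀)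
    (hγ : ∀ n ≥ n₀, γ n ≤ 1) (hstep : ∀ n ≥ n₀, (1 - γ n) * u n + γ n * c ≤ u (n + 1)) :
    ∀ n ≥ n₀, c ≤ u n := by
  intro n hn
  induction n, hn using Nat.le_induction with
  | base => exact h₀
  | succ n hn ih =>
    calc c = (1 - γ n) * c + γ n * c := by ring
      _ ≤ (1 - γ n) * u n + γ n * c := by gcongr; linarith [hγ n hn]
      _ ≤ u (n + 1) := hstep n hn

section MirrorDescentStep

open Real

variable {Y : Type*}

noncomputable def mirrorWeight (μ p q : Y → ℝ) (α η : ℝ) (y : Y) : ℝ :=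
  μ y ^ (α * η) * p y ^ (1 - α * η) * exp (η * q y)

variable {μ p q : Y → ℝ} {α η : ℝ}

theorem mirrorWeight_nonneg (hμ : ∀ y, 0 ≤ μ y) (hp : ∀ y, 0 ≤ p y) (y : Y) :
    0 ≤ mirrorWeight μ p q α η y := by
  have := hμ y; have := hp y
  unfold mirrorWeight; positivity

theorem mirrorWeight_pos {y : Y} (hμ : 0 < μ y) (hp : 0 < p y) : 0 < mirrorWeight μ p q α η y := by
  unfold mirrorWeight; positivity

theorem mirrorWeight_eq {y : Y} (hμ : 0 < μ y) (hp : 0 < p y) :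
    mirrorWeight μ p q α η y = p y * exp (η * (q y - α * log (p y / μ y))) := by
  rw [mirrorWeight, rpow_def_of_pos hμ, rpow_def_of_pos hp, ← exp_add, ← exp_add,
    ← exp_log hp, ← exp_add, exp_log hp, log_div hp.ne' hμ.ne']
  ring_nf

variable [Fintype Y]

noncomputable def mirrorUpdate (μ p q : Y → ℝ) (α η : ℝ) (y : Y) : ℝ :=
  mirrorWeight μ p q α η y / ∑ y', mirrorWeight μ p q α η y'

theorem sum_mirrorWeight_pos (hμ : ∀ y, 0 ≤ μ y) (hp : ∀ y, 0 ≤ p y) {y : Y} (hμy : 0 < μ y)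
    (hpy : 0 < p y) : 0 < ∑ y', mirrorWeight μ p q α η y' :=
  sum_pos' (fun y' _ => mirrorWeight_nonneg hμ hp y') ⟨y, mem_univ y, mirrorWeight_pos hμy hpy⟩

/-- Equality holds termwise on the support of `μ`; off it the weight vanishes. -/
theorem sum_mirrorWeight_le (hμ : ∀ y, 0 ≤ μ y) (hp : ∀ y, 0 ≤ p y)
    (hp_supp : ∀ y, 0 < μ y → 0 < p y) (hαη : α * η ≠ 0) :
    ∑ y, mirrorWeight μ p q α η y ≤ ∑ y, p y * exp (η * (q y - α * log (p y / μ y))) := by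
  refine sum_le_sum fun y _ => ?_
  rcases (hμ y).eq_or_lt with hμy | hμy
  · have := hp y
    rw [mirrorWeight, ← hμy, zero_rpow hαη]
    simp only [zero_mul]
    positivity
  · exact (mirrorWeight_eq hμy (hp_supp y hμy)).le

theorem mirrorUpdate_pos (hμ : ∀ y, 0 ≤ μ y) (hp : ∀ y, 0 ≤ p y) {y : Y} (hμy : 0 < μ y)
    (hpy : 0 < p y) : 0 < mirrorUpdate μ p q α η y :=
  div_pos (mirrorWeight_pos hμy hpy) (sum_mirrorWeight_pos hμ hp hμy hpy)

theorem log_mirrorUpdate_div {y : Y} (hμy : 0 < μ y) (hpy : 0 < p y)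
    (hZ : 0 < ∑ y', mirrorWeight μ p q α η y') :
    log (mirrorUpdate μ p q α η y / μ y) =
      (1 - α * η) * log (p y / μ y) + η * q y - log (∑ y', mirrorWeight μ p q α η y') := by
  have hratio : mirrorUpdate μ p q α η y / μ y =
      p y / μ y * exp (η * (q y - α * log (p y / μ y))) / ∑ y', mirrorWeight μ p q α η y' := by
    rw [mirrorUpdate, mirrorWeight_eq hμy hpy]
    ring
  rw [hratio, log_div (by positivity) hZ.ne', log_mul (by positivity) (exp_pos _).ne', log_exp]
  ring

theorem log_mirrorUpdate_div_ge (hμ : ∀ y, 0 ≤ μ y) (hp : ∀ y, 0 ≤ p y)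
    (hp_supp : ∀ y, 0 < μ y → 0 < p y) (hα : 0 < α) (hη : 0 < η) {c : ℝ} {y : Y}
    (hq : α * c ≤ q y) (hpartition : log (∑ y, p y * exp (η * (q y - α * log (p y / μ y)))) ≤ η)
    (hμy : 0 < μ y) :
    (1 - α * η) * log (p y / μ y) + α * η * (c - 1 / α) ≤ log (mirrorUpdate μ p q α η y / μ y) := by
  have hZ := sum_mirrorWeight_pos (q := q) (α := α) (η := η) hμ hp hμy (hp_supp y hμy)
  have hlogZ : log (∑ y, mirrorWeight μ p q α η y) ≤ η :=
    (log_le_log hZ (sum_mirrorWeight_le hμ hp hp_supp (by positivity))).trans hpartition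
  have hqη : η * (α * c) ≤ η * q y := mul_le_mul_of_nonneg_left hq hη.le
  have hshift : α * η * (c - 1 / α) = η * (α * c) - η := by field_simp
  rw [log_mirrorUpdate_div hμy (hp_supp y hμy) hZ, hshift]
  linarith

end MirrorDescentStep

theorem log_likelihood_ratio_bounds_general
    {X Y : Type} [Fintype Y]
    (π : ℕ → X → Y → ℝ) (μ : X → Y → ℝ) (Q : ℕ → X → Y → ℝ)
    (α μmin : ℝ) (H : ℕ) (η : ℕ → ℝ)
    (hα : 0 < α)
    (hη : ∀ t, η t = 2 / (α * (t + 2)))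
    (hμ : (∀ x y, 0 ≤ μ x y) ∧ ∀ x, ∑ y, μ x y = 1)
    (hμmin : 0 < μmin ∧ μmin ≤ 1)
    (hmin : ∀ x y, 0 < μ x y → μmin ≤ μ x y)
    (hdist : ∀ t x, (∀ y, 0 ≤ π t x y) ∧ ∑ y, π t x y = 1)
    (hinit : ∀ x y, π 1 x y = μ x y)
    (hQ : ∀ t x y, α * H * Real.log μmin ≤ Q t x y ∧ Q t x y ≤ 1)
    (hupdate : ∀ t x y, 1 ≤ t → 0 < μ x y →
      π (t + 1) x y =
        μ x y ^ (α * η t) * π t x y ^ (1 - α * η t) * Real.exp (η t * Q t x y) /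
          ∑ y', μ x y' ^ (α * η t) * π t x y' ^ (1 - α * η t) *
            Real.exp (η t * Q t x y'))
    (hpartition : ∀ t x, 1 ≤ t →
      Real.log (∑ y', π t x y' *
          Real.exp (η t * (Q t x y' - α * Real.log (π t x y' / μ x y')))) ≤ η t) :
    ∀ t, 1 ≤ t → ∀ x y, 0 < μ x y →
      (H : ℝ) * Real.log μmin - 1 / α ≤ Real.log (π t x y / μ x y) ∧
        Real.log (π t x y / μ x y) ≤ Real.log (1 / μmin) := by
  have hupd (t x y) (ht : 1 ≤ t) (hy : 0 < μ x y) :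
      π (t + 1) x y = mirrorUpdate (μ x) (π t x) (Q t x) α (η t) y := hupdate t x y ht hy
  have hη_pos (t : ℕ) : 0 < η t := by rw [hη]; positivity
  have hαη_le (t : ℕ) : α * η t ≤ 1 := by
    rw [hη, ← mul_div_assoc, mul_div_mul_left _ _ hα.ne', div_le_one (by positivity)]
    linarith [t.cast_nonneg (α := ℝ)]
  have hpos : ∀ t ≥ 1, ∀ x y, 0 < μ x y → 0 < π t x y := by
    refine Nat.le_induction (fun x y hy => hinit x y ▸ hy) fun t ht ih x y hy => ?_
    exact hupd t x y ht hy ▸ mirrorUpdate_pos (hμ.1 x) (hdist t x).1 hy (ih x y hy)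
  intro t ht x y hy
  constructor
  · refine le_of_le_affine_step (u := fun s => Real.log (π s x y / μ x y))
      (γ := fun s => α * η s) ?_ (fun t _ => hαη_le t) (fun t ht => ?_) t ht
    · rw [hinit, div_self hy.ne', Real.log_one, sub_nonpos]
      exact (mul_nonpos_of_nonneg_of_nonpos H.cast_nonneg
        (Real.log_nonpos hμmin.1.le hμmin.2)).trans (by positivity)
    rw [hupd t x y ht hy]
    exact log_mirrorUpdate_div_ge (hμ.1 x) (hdist t x).1 (hpos t ht x) hα (hη_pos t)
      (by rw [← mul_assoc]; exact (hQ t x y).1) (hpartition t x ht) hy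
  · have hπ : π t x y ≤ 1 :=
      (hdist t x).2 ▸ single_le_sum (fun i _ => (hdist t x).1 i) (mem_univ y)
    exact Real.log_le_log (div_pos (hpos t ht x y hy) hy)
      (div_le_div₀ zero_le_one hπ hμmin.1 (hmin x y hy))

/-- **Bounds on the log-likelihood ratio along mirror descent iterates (Lemma E.9).**
For the MD update `π_{t+1}(y|x) ∝ μ(y|x)^{αη_t} π_t(y|x)^{1−αη_t} e^{η_t Q_t(x,y)}`
with `π_1 = μ`, step sizes `η_t = 2/(α(t+2))`, Q-values satisfying
`α H log μ_min ≤ Q_t(x,y) ≤ 1`, and the log-partition bound, the log-likelihood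
ratio `L_t(y|x) = log(π_t(y|x)/μ(y|x))` satisfies
`H log μ_min − 1/α ≤ L_t(y|x) ≤ log(1/μ_min)` on the support of `μ`. -/
theorem log_likelihood_ratio_bounds
    {X Y : Type} [Fintype X] [Fintype Y]
    (π : ℕ → X → Y → ℝ) (μ : X → Y → ℝ) (Q : ℕ → X → Y → ℝ)
    (α μmin : ℝ) (H : ℕ) (η : ℕ → ℝ)
    (hα : 0 < α) (hH : 1 ≤ H)
    (hη : ∀ t, η t = 2 / (α * (t + 2)))
    (hμ : (∀ x y, 0 ≤ μ x y) ∧ ∀ x, ∑ y, μ x y = 1)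
    (hμmin : 0 < μmin ∧ μmin ≤ 1)
    (hmin : ∀ x y, 0 < μ x y → μmin ≤ μ x y)
    (hdist : ∀ t x, (∀ y, 0 ≤ π t x y) ∧ ∑ y, π t x y = 1)
    (hinit : ∀ x y, π 1 x y = μ x y)
    (hQ : ∀ t x y, α * H * Real.log μmin ≤ Q t x y ∧ Q t x y ≤ 1)
    (hupdate : ∀ t x y, 1 ≤ t → 0 < μ x y →
      π (t + 1) x y =
        μ x y ^ (α * η t) * π t x y ^ (1 - α * η t) * Real.exp (η t * Q t x y) /
          ∑ y', μ x y' ^ (α * η t) * π t x y' ^ (1 - α * η t) *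
            Real.exp (η t * Q t x y'))
    (hpartition : ∀ t x, 1 ≤ t →
      Real.log (∑ y', π t x y' *
          Real.exp (η t * (Q t x y' - α * Real.log (π t x y' / μ x y')))) ≤ η t) :
    ∀ t, 1 ≤ t → ∀ x y, 0 < μ x y →
      (H : ℝ) * Real.log μmin - 1 / α ≤ Real.log (π t x y / μ x y) ∧
        Real.log (π t x y / μ x y) ≤ Real.log (1 / μmin) :=
  log_likelihood_ratio_bounds_general π μ Q α μmin H η hα hη hμ hμmin hmin hdist hinit hQ hupdate
    hpartition
end
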